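/- arXiv:2407.05158 — 3 statements merged into one kernel-verified Lean document; each statement's English description precedes it below -/
import Mathlib

section
/- For every integer n ≥ 2, the gonality of the complete graph K_n equals n − 1. -/
open Finset

/-- A finite loopless multigraph on a vertex type `V`, given by a symmetric
edge-multiplicity function with zero diagonal. -/
structure Multigraph (V : Type) [Fintype V] [DecidableEq V] where
  m : V → V → ℕ
  symm : ∀ u v, m u v = m v u
  loopless : ∀ v, m v v = 0

namespace Multigraph

variable {V : Type} [Fintype V] [DecidableEq V] (G : Multigraph V)

/-- The underlying simple graph: adjacent iff joined by at least one edge. -/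
def toSimpleGraph : SimpleGraph V where
  Adj u v := 0 < G.m u v
  symm := by
    constructor
    intro u v h
    change 0 < G.m u v at h
    change 0 < G.m v u
    rw [G.symm v u]
    exact h
  loopless := by
    constructor
    intro v h
    change 0 < G.m v v at h
    rw [G.loopless v] at h
    exact lt_irrefl 0 h

/-- A multigraph is connected if its underlying simple graph is. -/
def Connected : Prop := G.toSimpleGraph.Connected

/-- The valence of a vertex: the number of edges incident to it. -/
def val (v : V) : ℕ := ∑ w, G.m v w

end Multigraph

/-- The degree of a divisor: the sum of its values. -/
def Divisor.deg {V : Type} [Fintype V] (D : V → ℤ) : ℤ := ∑ v, D v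

/-- A divisor is effective if all its values are nonnegative. -/
def Divisor.Effective {V : Type} (D : V → ℤ) : Prop := ∀ v, 0 ≤ D v

namespace Multigraph

variable {V : Type} [Fintype V] [DecidableEq V] (G : Multigraph V)

/-- The result of firing the vertex `v`: `v` loses its valence many chips, and
every other vertex `w` gains `m v w` chips. -/
def fire (v : V) (D : V → ℤ) : V → ℤ :=
  fun w => D w + (G.m v w : ℤ) - if w = v then (G.val v : ℤ) else 0

/-- Two divisors are equivalent if one is obtained from the other by a finite
sequence of firing moves. -/
def Equivalent (D D' : V → ℤ) : Prop :=
  Relation.ReflTransGen (fun A B => ∃ v, B = G.fire v A) D D'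

/-- A divisor `D` wins the Gonality Game if for every vertex `q`, the divisor
`D - 1_q` is equivalent to an effective divisor. -/
def Winning (D : V → ℤ) : Prop :=
  ∀ q : V, ∃ D' : V → ℤ,
    G.Equivalent (fun w => D w - if w = q then 1 else 0) D' ∧ Divisor.Effective D'

/-- The gonality of `G`: the minimum degree of an effective divisor that wins
the Gonality Game. -/
noncomputable def gonality : ℕ :=
  sInf {n : ℕ | ∃ D : V → ℤ, Divisor.Effective D ∧ G.Winning D ∧ Divisor.deg D = (n : ℤ)}

end Multigraph

/-- The multigraph associated to a simple graph: one edge for each adjacency. -/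
def Multigraph.ofSimpleGraph {V : Type} [Fintype V] [DecidableEq V]
    (G : SimpleGraph V) [DecidableRel G.Adj] : Multigraph V where
  m u v := if G.Adj u v then 1 else 0
  symm := by
    intro u v
    by_cases h : G.Adj u v
    · simp [h, h.symm]
    · have h' : ¬ G.Adj v u := fun hvu => h hvu.symm
      simp [h, h']
  loopless := by intro v; simp

/-!
Firing `v` subtracts the Laplacian of the indicator of `v`, so equivalent divisors differ by the
Laplacian of an integer firing script `c`. On the set `A` where `c` is maximal, every vertex of `A`
sends at least one chip along each edge leaving `A`; if the target divisor is effective, the source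
must therefore hold at least as many chips on `A` as there are edges leaving `A`. If `D` wins on
`K_n` and `D q = 0`, then `D - 1_q` is not itself effective, so its firing script is non-constant
and `D` has at least `|A| (n - |A|) ≥ n - 1` chips. Conversely `1 - 1_q` wins: firing every vertex
but `q` turns `1 - 2 • 1_q` into `(n - 2) • 1_q`.
-/

namespace Multigraph

variable {V : Type} [Fintype V] [DecidableEq V] (G : Multigraph V)

/-- For a firing script `c ≥ 0`, firing each vertex `v` exactly `c v` times turns `D` into
`D - G.laplacian c`. -/
def laplacian (c : V → ℤ) (v : V) : ℤ := ∑ w, (G.m v w : ℤ) * (c v - c w)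

lemma laplacian_add (c c' : V → ℤ) : G.laplacian (c + c') = G.laplacian c + G.laplacian c' := by
  ext v
  simp only [laplacian, Pi.add_apply, ← Finset.sum_add_distrib]
  exact Finset.sum_congr rfl fun w _ => by ring

lemma laplacian_const (a : ℤ) : G.laplacian (fun _ => a) = 0 := by
  ext v
  simp [laplacian]

lemma fire_eq_sub_laplacian_single (v : V) (D : V → ℤ) :
    G.fire v D = D - G.laplacian (Pi.single v 1) := by
  ext w
  rcases eq_or_ne w v with rfl | hwv
  · simp [fire, laplacian, val, Pi.single_apply, G.loopless, mul_sub, Finset.sum_sub_distrib]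
  · simp [fire, laplacian, Pi.single_apply, hwv, G.symm w v]

variable {G}

lemma Equivalent.exists_eq_sub_laplacian {D E : V → ℤ} (h : G.Equivalent D E) :
    ∃ c : V → ℤ, E = D - G.laplacian c := by
  induction h with
  | refl => exact ⟨0, by rw [show G.laplacian 0 = 0 from G.laplacian_const 0, sub_zero]⟩
  | tail _ hstep ih =>
    obtain ⟨c, rfl⟩ := ih
    obtain ⟨v, rfl⟩ := hstep
    exact ⟨c + Pi.single v 1, by rw [fire_eq_sub_laplacian_single, laplacian_add, sub_sub]⟩

variable (G)

lemma equivalent_sub_laplacian_indicator (S : Finset V) (D : V → ℤ) :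
    G.Equivalent D (D - G.laplacian fun v => if v ∈ S then 1 else 0) := by
  induction S using Finset.induction_on with
  | empty =>
    simp only [Finset.notMem_empty, if_false, laplacian_const, sub_zero]
    exact Relation.ReflTransGen.refl
  | @insert v S hvS ih =>
    have hind : (fun w => if w ∈ insert v S then (1 : ℤ) else 0) =
        (fun w => if w ∈ S then 1 else 0) + Pi.single v 1 := by
      ext w
      rcases eq_or_ne w v with rfl | hwv <;> simp_all
    refine ih.tail ⟨v, ?_⟩
    rw [hind, laplacian_add, fire_eq_sub_laplacian_single, sub_sub]

lemma sum_filter_lt_le_laplacian {c : V → ℤ} {v : V} (hv : ∀ w, c w ≤ c v) :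
    ∑ u ∈ univ.filter (fun u => c u < c v), (G.m v u : ℤ) ≤ G.laplacian c v := by
  rw [Finset.sum_filter]
  refine Finset.sum_le_sum fun u _ => ?_
  split_ifs with h
  · exact le_mul_of_one_le_right (Int.natCast_nonneg _) (by omega)
  · exact mul_nonneg (Int.natCast_nonneg _) (by linarith [hv u])

variable {G}

/-- `A` is the set of vertices fired most often by a firing script from `D` to `E`. -/
lemma exists_cut_of_equivalent {D E : V → ℤ} (h : G.Equivalent D E) (hE : Divisor.Effective E)
    (hne : D ≠ E) : ∃ A : Finset V, A.Nonempty ∧ Aᶜ.Nonempty ∧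
      ∀ v ∈ A, ∑ u ∈ Aᶜ, (G.m v u : ℤ) ≤ D v := by
  obtain ⟨c, rfl⟩ := h.exists_eq_sub_laplacian
  obtain ⟨v₀, -⟩ : ∃ v, D v ≠ (D - G.laplacian c) v := by
    by_contra! h
    exact hne (funext h)
  obtain ⟨v, -, hv⟩ := Finset.univ.exists_max_image c ⟨v₀, Finset.mem_univ _⟩
  refine ⟨univ.filter fun u => ¬ c u < c v, ⟨v, by simp⟩, ?_, fun w hw => ?_⟩
  · by_contra hempty
    have hconst : c = fun _ => c v := by
      ext u
      simp only [Finset.not_nonempty_iff_eq_empty, Finset.compl_filter, not_not,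
        Finset.filter_eq_empty_iff] at hempty
      have := hempty (Finset.mem_univ u)
      linarith [hv u (Finset.mem_univ u)]
    exact hne (by rw [hconst, laplacian_const, sub_zero])
  · have hcw : c w = c v := le_antisymm (hv w (Finset.mem_univ w)) (by simpa using hw)
    have hcut := G.sum_filter_lt_le_laplacian (c := c) (v := w) fun u => hcw ▸ hv u (mem_univ u)
    rw [Finset.compl_filter]
    simp only [not_not, hcw] at hcut ⊢
    linarith [hE w, show (D - G.laplacian c) w = D w - G.laplacian c w from rfl]

lemma gonality_eq_of_forall_le {k : ℕ} {D : V → ℤ} (hD : Divisor.Effective D) (hW : G.Winning D)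
    (hdeg : Divisor.deg D = k)
    (hmin : ∀ D', Divisor.Effective D' → G.Winning D' → (k : ℤ) ≤ Divisor.deg D') :
    G.gonality = k := by
  refine le_antisymm (Nat.sInf_le ⟨D, hD, hW, hdeg⟩) (le_csInf ⟨k, D, hD, hW, hdeg⟩ ?_)
  rintro m ⟨D', hD', hW', hdeg'⟩
  exact_mod_cast hdeg' ▸ hmin D' hD' hW'

lemma ofSimpleGraph_top_m (u v : V) :
    (ofSimpleGraph (⊤ : SimpleGraph V)).m u v = if u = v then 0 else 1 := by
  by_cases h : u = v <;> simp [ofSimpleGraph, h]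

lemma laplacian_ofSimpleGraph_top (c : V → ℤ) (v : V) :
    (ofSimpleGraph (⊤ : SimpleGraph V)).laplacian c v = Fintype.card V * c v - ∑ w, c w := by
  have hdiag (w : V) : ((if v = w then 0 else 1 : ℕ) : ℤ) * (c v - c w) = c v - c w := by
    split_ifs with h <;> simp [h]
  simp only [laplacian, ofSimpleGraph_top_m, hdiag, Finset.sum_sub_distrib, Finset.sum_const,
    Finset.card_univ, nsmul_eq_mul]

theorem card_sub_one_le_deg_of_winning_top {D : V → ℤ} (hD : Divisor.Effective D)
    (hW : (ofSimpleGraph (⊤ : SimpleGraph V)).Winning D) :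
    (Fintype.card V : ℤ) - 1 ≤ Divisor.deg D := by
  by_cases hpos : ∀ q, 0 < D q
  · calc (Fintype.card V : ℤ) - 1 ≤ ∑ _v : V, (1 : ℤ) := by simp
      _ ≤ Divisor.deg D := Finset.sum_le_sum fun v _ => hpos v
  push Not at hpos
  obtain ⟨q, hq⟩ := hpos
  obtain ⟨E, hDE, hE⟩ := hW q
  have hne : (fun w => D w - if w = q then 1 else 0) ≠ E := fun h => by
    have := hE q
    simp only [← h, if_true] at this
    omega
  obtain ⟨A, hA, hAc, hcut⟩ := exists_cut_of_equivalent hDE hE hne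
  have hcutA : (#A : ℤ) * #Aᶜ ≤ ∑ v ∈ A, D v := calc
    (#A : ℤ) * #Aᶜ = ∑ v ∈ A, ∑ u ∈ Aᶜ, (1 : ℤ) := by simp
    _ = ∑ v ∈ A, ∑ u ∈ Aᶜ, ((ofSimpleGraph (⊤ : SimpleGraph V)).m v u : ℤ) :=
      Finset.sum_congr rfl fun v hv => Finset.sum_congr rfl fun u hu => by
        rw [ofSimpleGraph_top_m, if_neg (by rintro rfl; exact Finset.mem_compl.1 hu hv)]; rfl
    _ ≤ ∑ v ∈ A, (D v - if v = q then 1 else 0) := Finset.sum_le_sum hcut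
    _ ≤ ∑ v ∈ A, D v := Finset.sum_le_sum fun v _ => by split_ifs <;> simp
  have hAD : ∑ v ∈ A, D v ≤ Divisor.deg D := Finset.sum_le_univ_sum_of_nonneg hD
  have hsplit : (#A : ℤ) + #Aᶜ = Fintype.card V := by exact_mod_cast Finset.card_add_card_compl A
  have h₁ : (1 : ℤ) ≤ #A := by exact_mod_cast hA.card_pos
  have h₂ : (1 : ℤ) ≤ #Aᶜ := by exact_mod_cast hAc.card_pos
  nlinarith

lemma deg_one_sub_single (q : V) :
    Divisor.deg (1 - Pi.single q 1 : V → ℤ) = Fintype.card V - 1 := by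
  simp [Divisor.deg, Finset.sum_sub_distrib]

lemma winning_top_one_sub_single (q₀ : V) (hV : 2 ≤ Fintype.card V) :
    (ofSimpleGraph (⊤ : SimpleGraph V)).Winning (1 - Pi.single q₀ 1) := by
  intro q
  by_cases hq : q = q₀
  · subst hq
    refine ⟨_, equivalent_sub_laplacian_indicator _ {q}ᶜ _, fun v => ?_⟩
    have hind : (fun w => if w ∈ ({q}ᶜ : Finset V) then (1 : ℤ) else 0) = 1 - Pi.single q 1 := by
      ext w
      by_cases hw : w = q <;> simp [hw]
    have hsum : ∑ w, (if w ∈ ({q}ᶜ : Finset V) then (1 : ℤ) else 0) = Fintype.card V - 1 := by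
      rw [hind]
      exact deg_one_sub_single q
    simp only [Pi.sub_apply, laplacian_ofSimpleGraph_top, hsum]
    by_cases hv : v = q <;> simp [hv, hV]
  · exact ⟨_, .refl, fun v => by by_cases hv : v = q <;> by_cases hv₀ : v = q₀ <;> simp_all⟩

end Multigraph

/-- For every integer `n ≥ 2`, the gonality of the complete graph `K_n`
equals `n - 1`. -/
theorem gonality_completeGraph (n : ℕ) (hn : 2 ≤ n) :
    (Multigraph.ofSimpleGraph (⊤ : SimpleGraph (Fin n))).gonality = n - 1 := by
  have hcard : 2 ≤ Fintype.card (Fin n) := by simpa using hn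
  let q₀ : Fin n := ⟨0, by omega⟩
  refine Multigraph.gonality_eq_of_forall_le (D := 1 - Pi.single q₀ 1) (fun v => ?_)
    (Multigraph.winning_top_one_sub_single q₀ hcard) ?_ fun D hD hW => ?_
  · by_cases hv : v = q₀ <;> simp [hv]
  · rw [Multigraph.deg_one_sub_single, Fintype.card_fin]
    omega
  · have := Multigraph.card_sub_one_le_deg_of_winning_top hD hW
    rw [Fintype.card_fin] at this
    omega
end

section
/- The hitting number of the 6-uniform scramble on the dodecahedron graph is at least 6; that is, every set of vertices meeting every 6-element vertex subset that induces a connected subgraph has size at least 6. -/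
/-- Edge list of the dodecahedron graph (as the generalized Petersen graph
`GP(10,2)`): an outer 10-cycle `0,…,9`, spokes `i – (10+i)`, and two inner
pentagons on the even and odd inner vertices. -/
def dodecahedronEdges : List (ℕ × ℕ) :=
  [(0,1),(1,2),(2,3),(3,4),(4,5),(5,6),(6,7),(7,8),(8,9),(9,0),
   (0,10),(1,11),(2,12),(3,13),(4,14),(5,15),(6,16),(7,17),(8,18),(9,19),
   (10,12),(12,14),(14,16),(16,18),(18,10),
   (11,13),(13,15),(15,17),(17,19),(19,11)]

/-- The dodecahedron graph: the 1-skeleton of the regular dodecahedron, a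
3-regular planar simple graph on 20 vertices with 30 edges and 12 pentagonal
faces. -/
def dodecahedronGraph : SimpleGraph (Fin 20) where
  Adj u v := u ≠ v ∧
    ((u.val, v.val) ∈ dodecahedronEdges ∨ (v.val, u.val) ∈ dodecahedronEdges)
  symm := ⟨fun _ _ h => ⟨h.1.symm, h.2.symm⟩⟩
  loopless := ⟨fun _ h => h.1 rfl⟩

instance : DecidableRel dodecahedronGraph.Adj :=
  fun _ _ => inferInstanceAs (Decidable (_ ∧ (_ ∨ _)))

/-- The eggs used in the proof: each entry is a bitmask, a 6-element connected
vertex set, and a spanning walk of it. Every 5-subset of `Fin 20` is disjoint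
from at least one of these eggs. -/
def eggTriples : List (ℕ × Finset (Fin 20) × List (Fin 20)) :=
  [(63, {0,1,2,3,4,5}, [0,1,2,3,4,5]),
   (264128, {6,7,8,9,10,18}, [6,7,8,9,8,18,10]),
   (698370, {1,11,13,15,17,19}, [1,11,19,17,15,13]),
   (118880, {5,6,12,14,15,16}, [5,15,5,6,16,14,12]),
   (29708, {2,3,10,12,13,14}, [2,3,13,3,2,12,10,12,14]),
   (852737, {0,8,9,16,18,19}, [0,9,19,9,8,18,16]),
   (655600, {4,5,6,7,17,19}, [4,5,6,7,17,19]),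
   (7683, {0,1,9,10,11,12}, [0,1,11,1,0,9,0,10,12]),
   (92184, {3,4,11,13,14,16}, [3,13,11,13,3,4,14,16]),
   (491904, {7,8,15,16,17,18}, [7,17,15,17,7,8,18,16]),
   (688769, {0,7,9,15,17,19}, [0,9,19,17,15,17,7]),
   (43120, {4,5,6,11,13,15}, [4,5,6,5,15,13,11]),
   (546822, {1,2,11,12,14,19}, [1,11,19,11,1,2,12,14]),
   (328771, {0,1,6,10,16,18}, [0,1,0,10,18,16,6]),
   (267292, {2,3,4,10,12,18}, [2,3,4,3,2,12,10,18]),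
   (903, {0,1,2,7,8,9}, [0,1,2,1,0,9,8,7]),
   (283696, {4,5,10,12,14,18}, [4,5,4,14,12,10,18]),
   (41068, {2,3,5,6,13,15}, [2,3,13,15,5,6]),
   (217280, {6,7,12,14,16,17}, [6,7,17,7,6,16,14,12]),
   (535304, {3,8,9,11,13,19}, [3,13,11,19,9,8]),
   (688928, {5,8,9,15,17,19}, [5,15,17,19,9,8]),
   (188440, {3,4,13,14,15,17}, [3,4,14,4,3,13,15,17]),
   (657422, {1,2,3,11,17,19}, [1,2,3,2,1,11,19,17]),
   (504, {3,4,5,6,7,8}, [3,4,5,6,7,8]),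
   (21525, {0,2,4,10,12,14}, [0,10,12,2,12,14,4]),
   (273411, {0,1,10,11,13,18}, [0,10,18,10,0,1,11,13]),
   (344848, {4,8,9,14,16,18}, [4,14,16,18,8,9]),
   (45084, {2,3,4,12,13,15}, [2,12,2,3,4,3,13,15]),
   (263617, {0,6,7,8,10,18}, [0,10,18,8,7,6]),
   (114744, {3,4,5,14,15,16}, [3,4,5,15,5,4,14,16]),
   (10759, {0,1,2,9,11,13}, [0,9,0,1,2,1,11,13]),
   (15366, {1,2,10,11,12,13}, [1,11,13,11,1,2,12,10]),
   (21523, {0,1,4,10,12,14}, [0,1,0,10,12,14,4]),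
   (10763, {0,1,3,9,11,13}, [0,9,0,1,11,13,3]),
   (535049, {0,3,9,11,13,19}, [0,9,19,11,13,3])]

def good (w : ℕ) : Bool := eggTriples.any (fun p => p.1 &&& w == 0)

def go : ℕ → ℕ → ℕ → Bool
  | 0, _, w => good w
  | k+1, lo, w => (List.range' lo (20-lo)).all (fun i => go k (i+1) (w ||| 2^i))

set_option maxHeartbeats 1600000 in
theorem allB : go 5 0 0 = true := by decide

theorem go_step {k lo w : ℕ} (h : go (k+1) lo w = true) {i : ℕ} (h1 : lo ≤ i) (h2 : i < 20) :
    go k (i+1) (w ||| 2^i) = true := by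
  have hd : go (k+1) lo w = (List.range' lo (20-lo)).all (fun i => go k (i+1) (w ||| 2^i)) := rfl
  rw [hd] at h
  exact List.all_eq_true.mp h i (List.mem_range'_1.mpr ⟨h1, by omega⟩)

theorem key {a b c d e : ℕ} (hab : a < b) (hbc : b < c) (hcd : c < d) (hde : d < e)
    (he : e < 20) :
    good (0 ||| 2^a ||| 2^b ||| 2^c ||| 2^d ||| 2^e) = true := by
  have h1 := go_step allB (Nat.zero_le a) (by omega)
  have h2 := go_step h1 (by omega : a + 1 ≤ b) (by omega)
  have h3 := go_step h2 (by omega : b + 1 ≤ c) (by omega)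
  have h4 := go_step h3 (by omega : c + 1 ≤ d) (by omega)
  have h5 := go_step h4 (by omega : d + 1 ≤ e) he
  exact h5

theorem eggs_card : ∀ p ∈ eggTriples, p.2.1.card = 6 := by decide

theorem eggs_bit : ∀ p ∈ eggTriples, ∀ x : Fin 20, x ∈ p.2.1 → p.1.testBit x.val = true := by
  decide

/-- Boolean adjacency chain check. -/
def chainB : Fin 20 → List (Fin 20) → Bool
  | _, [] => true
  | a, b :: t => decide (dodecahedronGraph.Adj a b) && chainB b t

theorem chain_of_chainB : ∀ (t : List (Fin 20)) (a : Fin 20), chainB a t = true →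
    List.Chain dodecahedronGraph.Adj a t := by
  intro t
  induction t with
  | nil => intro a _; exact List.Chain.nil
  | cons b u ih =>
    intro a h
    have hd : chainB a (b :: u) = (decide (dodecahedronGraph.Adj a b) && chainB b u) := rfl
    rw [hd, Bool.and_eq_true] at h
    exact List.Chain.cons (of_decide_eq_true h.1) (ih b h.2)

/-- Boolean check that the walk component of a triple is a spanning walk of the egg. -/
def checkWalk (p : ℕ × Finset (Fin 20) × List (Fin 20)) : Bool :=
  match p.2.2 with
  | [] => false
  | a :: t =>
      (a :: t).all (fun x => decide (x ∈ p.2.1)) &&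
      (List.finRange 20).all (fun x => !(decide (x ∈ p.2.1)) || (a :: t).contains x) &&
      chainB a t

theorem eggs_walk : ∀ p ∈ eggTriples, checkWalk p = true := by decide

theorem reachable_of_chain {V : Type*} {G : SimpleGraph V} :
    ∀ (t : List V) (a : V), List.Chain G.Adj a t → ∀ x ∈ a :: t, G.Reachable a x := by
  intro t
  induction t with
  | nil =>
    intro a _ x hx
    rw [List.mem_singleton] at hx
    subst hx
    rfl
  | cons b s ih =>
    intro a hch x hx
    replace hch := List.isChain_cons_cons.mp hch
    rcases List.mem_cons.mp hx with rfl | hx'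
    · rfl
    · exact (hch.1.reachable).trans (ih b hch.2 x hx')

theorem connected_of_chain {V : Type*} {G : SimpleGraph V} (a : V) (t : List V)
    (hch : List.Chain G.Adj a t) (hcov : ∀ v : V, v ∈ a :: t) : G.Connected := by
  have : Nonempty V := ⟨a⟩
  exact SimpleGraph.Connected.mk (fun u v =>
    ((reachable_of_chain t a hch u (hcov u)).symm).trans
      (reachable_of_chain t a hch v (hcov v)))

theorem chain_pmap {V : Type*} {G : SimpleGraph V} {s : Set V} :
    ∀ (t : List V) (a : V) (h : ∀ x ∈ a :: t, x ∈ s), List.Chain G.Adj a t →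
      List.Chain (G.induce s).Adj ⟨a, h a List.mem_cons_self⟩
        (t.pmap (fun x hx => (⟨x, hx⟩ : s)) (fun x hx => h x (List.mem_cons_of_mem a hx))) := by
  intro t
  induction t with
  | nil => intro a h _; exact List.Chain.nil
  | cons b u ih =>
    intro a h hch
    replace hch := List.isChain_cons_cons.mp hch
    exact List.Chain.cons hch.1 (ih b (fun x hx => h x (List.mem_cons_of_mem a hx)) hch.2)

theorem conn_of_checkWalk (p : ℕ × Finset (Fin 20) × List (Fin 20))
    (h : checkWalk p = true) :
    (dodecahedronGraph.induce ((p.2.1 : Finset (Fin 20)) : Set (Fin 20))).Connected := by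
  obtain ⟨m, A, l⟩ := p
  unfold checkWalk at h
  cases l with
  | nil => simp at h
  | cons a t =>
    rw [Bool.and_eq_true, Bool.and_eq_true] at h
    obtain ⟨⟨hsubB, hcovB⟩, hchB⟩ := h
    have hsub : ∀ x ∈ a :: t, x ∈ A := fun x hx =>
      of_decide_eq_true (List.all_eq_true.mp hsubB x hx)
    have hcov : ∀ x ∈ A, x ∈ a :: t := by
      intro x hx
      have hb := List.all_eq_true.mp hcovB x (List.mem_finRange x)
      rw [decide_eq_true hx] at hb
      simpa using hb
    have hch := chain_of_chainB t a hchB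
    have hsub' : ∀ x ∈ a :: t, x ∈ (A : Set (Fin 20)) :=
      fun x hx => Finset.mem_coe.mpr (hsub x hx)
    refine connected_of_chain (⟨a, hsub' a List.mem_cons_self⟩ : (A : Set (Fin 20)))
      (t.pmap (fun x hx => ⟨x, hx⟩) (fun x hx => hsub' x (List.mem_cons_of_mem a hx)))
      (chain_pmap t a hsub' hch) ?_
    rintro ⟨x, hx⟩
    have hxl : x ∈ a :: t := hcov x (Finset.mem_coe.mp hx)
    rcases List.mem_cons.mp hxl with rfl | hx'
    · exact List.mem_cons_self
    · exact List.mem_cons_of_mem _ (List.mem_pmap.mpr ⟨x, hx', rfl⟩)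

theorem list_len5 {α : Type*} : ∀ (l : List α), l.length = 5 →
    ∃ a b c d e, l = [a, b, c, d, e] := by
  intro l h
  rcases l with _ | ⟨a, l⟩; · simp at h
  rcases l with _ | ⟨b, l⟩; · simp at h
  rcases l with _ | ⟨c, l⟩; · simp at h
  rcases l with _ | ⟨d, l⟩; · simp at h
  rcases l with _ | ⟨e, l⟩; · simp at h
  rcases l with _ | ⟨f, l⟩
  · exact ⟨a, b, c, d, e, rfl⟩
  · simp at h

/-- The hitting number of the 6-uniform scramble on the dodecahedron graph is
at least `6`: every set of vertices meeting every 6-element vertex subset that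
induces a connected subgraph has size at least `6`. -/
theorem dodecahedron_sixUniform_hittingNumber (W : Finset (Fin 20))
    (hW : ∀ A : Finset (Fin 20), A.card = 6 →
      (dodecahedronGraph.induce (A : Set (Fin 20))).Connected →
      (A ∩ W).Nonempty) :
    6 ≤ W.card := by
  by_contra hlt
  push_neg at hlt
  obtain ⟨U, hWU, _, hU5⟩ :=
    Finset.exists_subsuperset_card_eq (Finset.subset_univ W) (by omega)
      (by simp : 5 ≤ (Finset.univ : Finset (Fin 20)).card)
  have hlen : (U.sort (· ≤ ·)).length = 5 := by rw [Finset.length_sort, hU5]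
  obtain ⟨a, b, c, d, e, hl⟩ := list_len5 _ hlen
  have hsorted : List.Pairwise (· < ·) (U.sort (· ≤ ·)) := U.sortedLT_sort.pairwise
  rw [hl] at hsorted
  simp only [List.pairwise_cons, List.mem_cons, List.mem_singleton, List.not_mem_nil,
    forall_eq_or_imp, forall_eq, List.Pairwise.nil, and_true, IsEmpty.forall_iff,
    implies_true] at hsorted
  obtain ⟨⟨hab, _, _, _⟩, ⟨hbc, _, _⟩, ⟨hcd, _⟩, hde⟩ := hsorted
  have hmemU : ∀ x : Fin 20, x ∈ U ↔ x = a ∨ x = b ∨ x = c ∨ x = d ∨ x = e := by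
    intro x
    rw [← Finset.mem_sort (α := Fin 20) (· ≤ ·), hl]
    simp
  have hg := key (Fin.lt_def.mp hab) (Fin.lt_def.mp hbc) (Fin.lt_def.mp hcd)
    (Fin.lt_def.mp hde) e.isLt
  unfold good at hg
  rw [List.any_eq_true] at hg
  obtain ⟨p, hp, hpw⟩ := hg
  rw [beq_iff_eq] at hpw
  have hm : p.1 &&& (0 ||| 2^a.val ||| 2^b.val ||| 2^c.val ||| 2^d.val ||| 2^e.val) = 0 := hpw
  have hnot : ∀ x : Fin 20, x ∈ U → x ∉ p.2.1 := by
    intro x hxU hxA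
    have hbit : Nat.testBit (0 ||| 2^a.val ||| 2^b.val ||| 2^c.val ||| 2^d.val ||| 2^e.val)
        x.val = true := by
      rcases (hmemU x).mp hxU with rfl | rfl | rfl | rfl | rfl <;>
        simp [Nat.testBit_lor, Nat.testBit_two_pow_self]
    have h0 : Nat.testBit (p.1 &&& (0 ||| 2^a.val ||| 2^b.val ||| 2^c.val ||| 2^d.val |||
        2^e.val)) x.val = false := by
      rw [hm]; exact Nat.zero_testBit _
    rw [Nat.testBit_land, hbit, Bool.and_true] at h0
    rw [eggs_bit p hp x hxA] at h0
    exact absurd h0 (by simp)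
  obtain ⟨x, hx⟩ := hW p.2.1 (eggs_card p hp) (conn_of_checkWalk p (eggs_walk p hp))
  rw [Finset.mem_inter] at hx
  exact hnot x (hWU hx.2) hx.1
end

section
/- Let H be a subgraph of the icosahedron graph. If |V(H)| = 2 or |V(H)| = 10 then outdeg(H) ≥ 8, and if 3 ≤ |V(H)| ≤ 9 then outdeg(H) ≥ 9. -/
/-- Edge list of the icosahedron graph: apexes `0` and `11`, an upper pentagon
`1,…,5`, a lower pentagon `6,…,10`, with an antiprism between the pentagons. -/
def icosahedronEdges : List (ℕ × ℕ) :=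
  [(0,1),(0,2),(0,3),(0,4),(0,5),
   (1,2),(2,3),(3,4),(4,5),(5,1),
   (1,6),(1,7),(2,7),(2,8),(3,8),(3,9),(4,9),(4,10),(5,10),(5,6),
   (6,7),(7,8),(8,9),(9,10),(10,6),
   (11,6),(11,7),(11,8),(11,9),(11,10)]

/-- The icosahedron graph: the 1-skeleton of the regular icosahedron, the
5-regular simple graph on 12 vertices with 30 edges. -/
def icosahedronGraph : SimpleGraph (Fin 12) where
  Adj u v := u ≠ v ∧
    ((u.val, v.val) ∈ icosahedronEdges ∨ (v.val, u.val) ∈ icosahedronEdges)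
  symm := ⟨fun _ _ h => ⟨h.1.symm, h.2.symm⟩⟩
  loopless := ⟨fun _ h => h.1 rfl⟩

instance : DecidableRel icosahedronGraph.Adj :=
  fun _ _ => inferInstanceAs (Decidable (_ ∧ (_ ∨ _)))

/-- The outdegree of a subgraph of `G` with vertex set `A`: the number of edges
of `G` with exactly one endpoint in `A`. -/
def SimpleGraph.outdeg {V : Type} [Fintype V] [DecidableEq V]
    (G : SimpleGraph V) [DecidableRel G.Adj] (A : Finset V) : ℕ :=
  ∑ u ∈ A, ∑ v ∈ Aᶜ, if G.Adj u v then 1 else 0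

lemma sum12' (f : Fin 12 → ℕ) : ∑ i, f i =
    f 0 + f 1 + f 2 + f 3 + f 4 + f 5 + f 6 + f 7 + f 8 + f 9 + f 10 + f 11 := by
  simp [Fin.sum_univ_succ, add_assoc]

/-- For a subgraph `H` of the icosahedron graph: if `|V(H)| = 2` or
`|V(H)| = 10` then `outdeg(H) ≥ 8`, and if `3 ≤ |V(H)| ≤ 9` then
`outdeg(H) ≥ 9`. -/
theorem icosahedron_outdeg (A : Finset (Fin 12)) :
    ((A.card = 2 ∨ A.card = 10) → 8 ≤ icosahedronGraph.outdeg A) ∧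
    (3 ≤ A.card → A.card ≤ 9 → 9 ≤ icosahedronGraph.outdeg A) := by
  have hcard : A.card = ∑ i : Fin 12, if decide (i ∈ A) = true then 1 else 0 := by
    simp only [decide_eq_true_eq, Finset.sum_ite_mem, Finset.univ_inter,
      Finset.card_eq_sum_ones]
  have hout : icosahedronGraph.outdeg A =
      ∑ u : Fin 12, ∑ v : Fin 12,
        if icosahedronGraph.Adj u v then
          (if decide (u ∈ A) = true then 1 else 0) * (if decide (v ∈ A) = true then 0 else 1)
        else 0 := by
    have h1 : ∀ (s : Finset (Fin 12)) (f : Fin 12 → ℕ),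
        ∑ v ∈ s, f v = ∑ v : Fin 12, if v ∈ s then f v else 0 := fun s f => by
      rw [Finset.sum_ite_mem, Finset.univ_inter]
    simp only [SimpleGraph.outdeg, decide_eq_true_eq]
    rw [h1 A]
    refine Finset.sum_congr rfl fun u _ => ?_
    by_cases hu : u ∈ A
    · rw [if_pos hu, h1 Aᶜ]
      refine Finset.sum_congr rfl fun v _ => ?_
      by_cases hv : v ∈ A <;> simp [hu, hv, mul_comm]
    · simp [hu]
  rw [hcard, hout]
  simp only [sum12']
  simp (config := { decide := true }) only [if_true, if_false, add_zero, zero_add, mul_zero,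
    zero_mul, mul_one, one_mul]
  generalize decide ((0 : Fin 12) ∈ A) = b0
  generalize decide ((1 : Fin 12) ∈ A) = b1
  generalize decide ((2 : Fin 12) ∈ A) = b2
  generalize decide ((3 : Fin 12) ∈ A) = b3
  generalize decide ((4 : Fin 12) ∈ A) = b4
  generalize decide ((5 : Fin 12) ∈ A) = b5
  generalize decide ((6 : Fin 12) ∈ A) = b6
  generalize decide ((7 : Fin 12) ∈ A) = b7
  generalize decide ((8 : Fin 12) ∈ A) = b8
  generalize decide ((9 : Fin 12) ∈ A) = b9
  generalize decide ((10 : Fin 12) ∈ A) = b10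
  generalize decide ((11 : Fin 12) ∈ A) = b11
  revert b0 b1 b2 b3 b4 b5 b6 b7 b8 b9 b10 b11
  decide
end
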